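/- Let (A^{(n)}) be a sequence of random 0-1 matrices, where A^{(n)} ∈ {0,1}^{n×n} has independent Bernoulli entries with mean matrix Q^{(n)} ∈ [0,1]^{n×n}. Then almost surely, ‖A^{(n)}(A^{(n)})ᵀ − Q^{(n)}(Q^{(n)})ᵀ‖_F ≤ √3 · n^{3/2} √(log n) for all but finitely many n. -/

import Mathlib

open MeasureTheory ProbabilityTheory Matrix Filter

noncomputable def frob {n m : ℕ} (M : Matrix (Fin n) (Fin m) ℝ) : ℝ :=
  Real.sqrt (∑ i, ∑ j, (M i j) ^ 2)

/-! For `i ≠ j`, the entry `(AAᵀ - QQᵀ) i j = ∑ k, (A i k * A j k - Q i k * Q j k)` is a centred sum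
of `n` independent Bernoulli variables, so by Hoeffding's inequality it exceeds `√(2 n log n)` with
probability at most `2 n⁻⁴`. A union bound over the `n²` entries gives `2 n⁻²`, which is summable,
so by Borel–Cantelli almost surely every off-diagonal entry is eventually at most `√(2 n log n)`.
The diagonal entries are trivially at most `n`, whence
`‖AAᵀ - QQᵀ‖_F² ≤ 2 n³ log n + n³ ≤ 3 n³ log n` as soon as `log n ≥ 1`. -/

open scoped NNReal
open Real Finset

namespace ProbabilityTheory

variable {Ω ι : Type*} [MeasurableSpace Ω] {μ : Measure Ω}

lemma HasSubgaussianMGF.measureReal_abs_ge_le [IsFiniteMeasure μ] {X : Ω → ℝ} {c : ℝ≥0}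
    (h : HasSubgaussianMGF X c μ) {ε : ℝ} (hε : 0 ≤ ε) :
    μ.real {ω | ε ≤ |X ω|} ≤ 2 * exp (-ε ^ 2 / (2 * c)) :=
  calc μ.real {ω | ε ≤ |X ω|}
      ≤ μ.real ({ω | ε ≤ X ω} ∪ {ω | ε ≤ (-X) ω}) :=
        measureReal_mono fun ω hω ↦ by
          rcases le_abs'.mp (show ε ≤ |X ω| from hω) with h | h
          · exact Or.inr (by simp only [Set.mem_ofPred_eq, Pi.neg_apply]; linarith)
          · exact Or.inl h
    _ ≤ μ.real {ω | ε ≤ X ω} + μ.real {ω | ε ≤ (-X) ω} := measureReal_union_le _ _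
    _ ≤ 2 * exp (-ε ^ 2 / (2 * c)) := by
        linarith [h.measure_ge_le hε, h.neg.measure_ge_le hε]

lemma measureReal_abs_sum_sub_integral_ge_le [IsProbabilityMeasure μ] {X : ι → Ω → ℝ}
    (hind : iIndepFun X μ) (hmeas : ∀ i, Measurable (X i)) (hX : ∀ i ω, X i ω ∈ Set.Icc 0 1)
    (s : Finset ι) {ε : ℝ} (hε : 0 ≤ ε) :
    μ.real {ω | ε ≤ |∑ i ∈ s, (X i ω - μ[X i])|} ≤ 2 * exp (-2 * ε ^ 2 / #s) := by
  have hsubG : ∀ i ∈ s, HasSubgaussianMGF (fun ω ↦ X i ω - μ[X i]) (1 / 4) μ := fun i _ ↦ by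
    convert hasSubgaussianMGF_of_mem_Icc (hmeas i).aemeasurable (ae_of_all μ (hX i)) using 1
    norm_num
  have hcentered : iIndepFun (fun i ω ↦ X i ω - μ[X i]) μ :=
    hind.comp (fun i (x : ℝ) ↦ x - ∫ ω, X i ω ∂μ) fun _ ↦ measurable_id.sub_const _
  refine ((HasSubgaussianMGF.sum_of_iIndepFun hcentered hsubG).measureReal_abs_ge_le hε).trans_eq
    ?_
  congr 2
  push_cast
  simp only [sum_const, nsmul_eq_mul]
  ring

lemma iIndepFun.iIndepSet_inter_preimage {κ β : Type*} [MeasurableSpace β] {f : ι → Ω → β}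
    (hf : iIndepFun f μ) (hfm : ∀ i, Measurable (f i)) {B : Set β} (hB : MeasurableSet B)
    {g h : κ → ι} (hg : g.Injective) (hh : h.Injective) (hgh : ∀ k l, g k ≠ h l) :
    iIndepSet (fun k ↦ f (g k) ⁻¹' B ∩ f (h k) ⁻¹' B) μ := by
  classical
  have hmeas_inter (s : Finset κ) : μ (⋂ k ∈ s, f (g k) ⁻¹' B ∩ f (h k) ⁻¹' B)
      = ∏ k ∈ s, μ (f (g k) ⁻¹' B) * μ (f (h k) ⁻¹' B) := by
    have hdisj : Disjoint (s.map ⟨g, hg⟩) (s.map ⟨h, hh⟩) := by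
      simp only [Finset.disjoint_left, Finset.mem_map, Function.Embedding.coeFn_mk]
      rintro _ ⟨k, -, rfl⟩ ⟨l, -, hl⟩
      exact hgh k l hl.symm
    have hset : ⋂ k ∈ s, f (g k) ⁻¹' B ∩ f (h k) ⁻¹' B
        = ⋂ i ∈ s.map ⟨g, hg⟩ ∪ s.map ⟨h, hh⟩, f i ⁻¹' B := by
      ext ω
      simp [or_imp, forall_and]
    rw [hset, hf.meas_biInter fun i _ ↦ ⟨B, hB, rfl⟩, Finset.prod_union hdisj,
      Finset.prod_map, Finset.prod_map, ← Finset.prod_mul_distrib]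
    rfl
  rw [iIndepSet_iff_meas_biInter fun k ↦ (hfm _ hB).inter (hfm _ hB)]
  refine fun s ↦ (hmeas_inter s).trans (Finset.prod_congr rfl fun k _ ↦ ?_)
  simpa using (hmeas_inter {k}).symm

end ProbabilityTheory

lemma MeasureTheory.ae_eventually_notMem_of_measureReal_le {α : Type*} [MeasurableSpace α]
    {μ : Measure α} [IsFiniteMeasure μ] {s : ℕ → Set α} {f : ℕ → ℝ} (hf : Summable f)
    (hs : ∀ n, μ.real (s n) ≤ f n) : ∀ᵐ x ∂μ, ∀ᶠ n in atTop, x ∉ s n := by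
  have hf0 (n : ℕ) : 0 ≤ f n := measureReal_nonneg.trans (hs n)
  refine ae_eventually_notMem (ne_top_of_le_ne_top (ENNReal.ofReal_ne_top (r := ∑' n, f n)) ?_)
  rw [ENNReal.ofReal_tsum_of_nonneg hf0 hf]
  refine ENNReal.tsum_le_tsum fun n ↦ ?_
  rw [← ofReal_measureReal (μ := μ) (s := s n)]
  exact ENNReal.ofReal_le_ofReal (hs n)

lemma abs_mul_transpose_sub_apply_le {m k : Type*} [Fintype k] {A Q : Matrix m k ℝ}
    (hA : ∀ u v, A u v ∈ Set.Icc (0 : ℝ) 1) (hQ : ∀ u v, Q u v ∈ Set.Icc (0 : ℝ) 1) (i j : m) :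
    |(A * Aᵀ - Q * Qᵀ) i j| ≤ Fintype.card k := by
  have hprod (M : Matrix m k ℝ) (hM : ∀ u v, M u v ∈ Set.Icc (0 : ℝ) 1) (l : k) :
      M i l * M j l ∈ Set.Icc (0 : ℝ) 1 :=
    ⟨mul_nonneg (hM i l).1 (hM j l).1, mul_le_one₀ (hM i l).2 (hM j l).1 (hM j l).2⟩
  calc |(A * Aᵀ - Q * Qᵀ) i j| = |∑ l, (A i l * A j l - Q i l * Q j l)| := by
        simp [Matrix.mul_apply, sum_sub_distrib]
    _ ≤ ∑ l, |A i l * A j l - Q i l * Q j l| := abs_sum_le_sum_abs _ _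
    _ ≤ ∑ _l : k, (1 : ℝ) := sum_le_sum fun l _ ↦
        abs_sub_le_of_nonneg_of_le (hprod A hA l).1 (hprod A hA l).2 (hprod Q hQ l).1
          (hprod Q hQ l).2
    _ = Fintype.card k := by simp

lemma sum_sq_apply_le_of_abs_apply_le {n : ℕ} (M : Matrix (Fin n) (Fin n) ℝ) {a b : ℝ}
    (hdiag : ∀ i, |M i i| ≤ b) (hoff : ∀ i j, i ≠ j → |M i j| ≤ a) :
    ∑ i, ∑ j, M i j ^ 2 ≤ n ^ 2 * a ^ 2 + n * b ^ 2 := by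
  have hentry (i j : Fin n) : M i j ^ 2 ≤ a ^ 2 + if i = j then b ^ 2 else 0 := by
    rw [← sq_abs]
    split_ifs with hij
    · subst hij
      nlinarith [hdiag i, abs_nonneg (M i i), sq_nonneg a]
    · nlinarith [hoff i j hij, abs_nonneg (M i j)]
  calc ∑ i, ∑ j, M i j ^ 2 ≤ ∑ i : Fin n, ∑ j : Fin n, (a ^ 2 + if i = j then b ^ 2 else 0) :=
        sum_le_sum fun i _ ↦ sum_le_sum fun j _ ↦ hentry i j
    _ = n ^ 2 * a ^ 2 + n * b ^ 2 := by
        simp only [sum_add_distrib, sum_const, card_univ, Fintype.card_fin, nsmul_eq_mul,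
          sum_ite_eq, mem_univ, if_true]
        ring

lemma frob_le_of_abs_offDiag_le {n : ℕ} (hn : 3 ≤ n) (M : Matrix (Fin n) (Fin n) ℝ)
    (hdiag : ∀ i, |M i i| ≤ n) (hoff : ∀ i j, i ≠ j → |M i j| ≤ √(2 * n * log n)) :
    frob M ≤ √3 * (n : ℝ) ^ ((3 : ℝ) / 2) * √(log n) := by
  have hn3 : (3 : ℝ) ≤ n := by exact_mod_cast hn
  have hlog : 1 ≤ log n := by
    rw [Real.le_log_iff_exp_le (by linarith)]
    linarith [Real.exp_one_lt_d9]
  have hsum := sum_sq_apply_le_of_abs_apply_le M hdiag hoff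
  rw [Real.sq_sqrt (by positivity)] at hsum
  calc frob M ≤ √(3 * ((n : ℝ) ^ 3 * log n)) := by
        refine Real.sqrt_le_sqrt (hsum.trans ?_)
        nlinarith [pow_pos (show (0 : ℝ) < n by linarith) 3]
    _ = √3 * (n : ℝ) ^ ((3 : ℝ) / 2) * √(log n) := by
        rw [Real.sqrt_mul (by norm_num), Real.sqrt_mul (by positivity), ← mul_assoc]
        congr 2
        rw [Real.sqrt_eq_rpow, ← Real.rpow_natCast, ← Real.rpow_mul (by positivity)]
        norm_num

section RandomBernoulliMatrix

variable {Ω : Type*} [MeasurableSpace Ω] {μ : Measure Ω} [IsProbabilityMeasure μ] {n : ℕ}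
  {Q : Matrix (Fin n) (Fin n) ℝ} {A : Ω → Matrix (Fin n) (Fin n) ℝ}

lemma measureReal_abs_mul_transpose_sub_apply_ge_le
    (hQ : ∀ u v, Q u v ∈ Set.Icc (0 : ℝ) 1) (hmeas : ∀ u v, Measurable (fun ω ↦ A ω u v))
    (h01 : ∀ ω u v, A ω u v = 0 ∨ A ω u v = 1)
    (hber : ∀ u v, μ {ω | A ω u v = 1} = ENNReal.ofReal (Q u v))
    (hind : iIndepFun (fun (p : Fin n × Fin n) ω ↦ A ω p.1 p.2) μ)
    {i j : Fin n} (hij : i ≠ j) {ε : ℝ} (hε : 0 ≤ ε) :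
    μ.real {ω | ε ≤ |(A ω * (A ω)ᵀ - Q * Qᵀ) i j|} ≤ 2 * exp (-2 * ε ^ 2 / n) := by
  set E : Fin n → Set Ω := fun k ↦ {ω | A ω i k = 1} ∩ {ω | A ω j k = 1}
  have hEm (k : Fin n) : MeasurableSet (E k) :=
    (hmeas i k (measurableSet_singleton 1)).inter (hmeas j k (measurableSet_singleton 1))
  have hE : iIndepSet E μ :=
    hind.iIndepSet_inter_preimage (fun p ↦ hmeas p.1 p.2) (measurableSet_singleton 1)
      (g := fun k ↦ (i, k)) (h := fun k ↦ (j, k)) (fun _ _ h ↦ congrArg Prod.snd h)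
      (fun _ _ h ↦ congrArg Prod.snd h) fun _ _ h ↦ hij (congrArg Prod.fst h)
  set Y : Fin n → Ω → ℝ := fun k ↦ (E k).indicator fun _ ↦ 1
  have hY (ω : Ω) (k : Fin n) : A ω i k * A ω j k = Y k ω := by
    rcases h01 ω i k with h | h <;> rcases h01 ω j k with h' | h' <;> simp [Y, E, h, h']
  have hmean (k : Fin n) : μ[Y k] = Q i k * Q j k := by
    have hne : ((i, k) : Fin n × Fin n) ≠ (j, k) := fun h ↦ hij (congrArg Prod.fst h)
    have hmul : μ (E k) = μ {ω | A ω i k = 1} * μ {ω | A ω j k = 1} :=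
      (hind.indepFun hne).measure_inter_preimage_eq_mul _ _ (measurableSet_singleton 1)
        (measurableSet_singleton 1)
    rw [show μ[Y k] = μ.real (E k) from integral_indicator_one (hEm k), measureReal_def, hmul,
      hber, hber, ENNReal.toReal_mul, ENNReal.toReal_ofReal (hQ i k).1,
      ENNReal.toReal_ofReal (hQ j k).1]
  have hentry (ω : Ω) : (A ω * (A ω)ᵀ - Q * Qᵀ) i j = ∑ k, (Y k ω - μ[Y k]) := by
    simp [Matrix.mul_apply, hY, hmean]
  have hY01 (k : Fin n) (ω : Ω) : Y k ω ∈ Set.Icc (0 : ℝ) 1 := by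
    by_cases h : ω ∈ E k <;> simp [Y, h]
  simp_rw [hentry]
  simpa only [card_univ, Fintype.card_fin] using measureReal_abs_sum_sub_integral_ge_le
    hE.iIndepFun_indicator (fun k ↦ measurable_one.indicator (hEm k)) hY01 univ hε

lemma measureReal_exists_offDiag_abs_mul_transpose_sub_apply_gt_le
    (hQ : ∀ u v, Q u v ∈ Set.Icc (0 : ℝ) 1) (hmeas : ∀ u v, Measurable (fun ω ↦ A ω u v))
    (h01 : ∀ ω u v, A ω u v = 0 ∨ A ω u v = 1)
    (hber : ∀ u v, μ {ω | A ω u v = 1} = ENNReal.ofReal (Q u v))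
    (hind : iIndepFun (fun (p : Fin n × Fin n) ω ↦ A ω p.1 p.2) μ) :
    μ.real {ω | ∃ i j, i ≠ j ∧ √(2 * n * log n) < |(A ω * (A ω)ᵀ - Q * Qᵀ) i j|}
      ≤ 2 / n ^ 2 := by
  set a := √(2 * n * log n)
  have hterm (i j : Fin n) :
      μ.real {ω | i ≠ j ∧ a < |(A ω * (A ω)ᵀ - Q * Qᵀ) i j|} ≤ 2 * exp (-2 * a ^ 2 / n) := by
    by_cases hij : i = j
    · simp only [hij, ne_eq, not_true_eq_false, false_and, Set.ofPred_false, measureReal_empty]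
      positivity
    · refine (measureReal_mono fun ω hω ↦ le_of_lt hω.2).trans ?_
      exact measureReal_abs_mul_transpose_sub_apply_ge_le hQ hmeas h01 hber hind hij
        (Real.sqrt_nonneg _)
  have hexp : (n : ℝ) ^ 2 * (2 * exp (-2 * a ^ 2 / n)) = 2 / n ^ 2 := by
    rcases n.eq_zero_or_pos with rfl | hn
    · simp
    have hn' : (0 : ℝ) < n := by exact_mod_cast hn
    have : -2 * a ^ 2 / n = log ((n ^ 4 : ℝ)⁻¹) := by
      rw [Real.sq_sqrt (by positivity), Real.log_inv, Real.log_pow]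
      field_simp
      ring
    rw [this, Real.exp_log (by positivity)]
    field_simp
  calc μ.real {ω | ∃ i j, i ≠ j ∧ a < |(A ω * (A ω)ᵀ - Q * Qᵀ) i j|}
      = μ.real (⋃ i, ⋃ j, {ω | i ≠ j ∧ a < |(A ω * (A ω)ᵀ - Q * Qᵀ) i j|}) := by
        simp only [Set.ofPred_exists]
    _ ≤ ∑ i, ∑ j, μ.real {ω | i ≠ j ∧ a < |(A ω * (A ω)ᵀ - Q * Qᵀ) i j|} :=
        (measureReal_iUnion_fintype_le _).trans
          (sum_le_sum fun i _ ↦ measureReal_iUnion_fintype_le _)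
    _ ≤ ∑ _i : Fin n, ∑ _j : Fin n, 2 * exp (-2 * a ^ 2 / n) :=
        sum_le_sum fun i _ ↦ sum_le_sum fun j _ ↦ hterm i j
    _ = 2 / n ^ 2 := by
        rw [← hexp]
        simp [sq, mul_assoc]

end RandomBernoulliMatrix

/-- For a sequence of random 0-1 matrices `A⁽ⁿ⁾ ∈ {0,1}^{n×n}` with
independent Bernoulli entries of mean matrices `Q⁽ⁿ⁾ ∈ [0,1]^{n×n}`, almost surely
`‖A⁽ⁿ⁾(A⁽ⁿ⁾)ᵀ − Q⁽ⁿ⁾(Q⁽ⁿ⁾)ᵀ‖_F ≤ √3 · n^{3/2} √(log n)` for all but finitely many `n`. -/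
theorem stmt2 {Ω : Type*} [MeasurableSpace Ω]
    (μ : Measure Ω) [IsProbabilityMeasure μ]
    (Q : ∀ n : ℕ, Matrix (Fin n) (Fin n) ℝ)
    (hQ : ∀ n u v, Q n u v ∈ Set.Icc (0 : ℝ) 1)
    (A : ∀ n : ℕ, Ω → Matrix (Fin n) (Fin n) ℝ)
    (hmeas : ∀ n (u v : Fin n), Measurable (fun ω => A n ω u v))
    (h01 : ∀ n ω (u v : Fin n), A n ω u v = 0 ∨ A n ω u v = 1)
    (hber : ∀ n (u v : Fin n), μ {ω | A n ω u v = 1} = ENNReal.ofReal (Q n u v))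
    (hind : ∀ n, iIndepFun
      (fun (p : Fin n × Fin n) ω => A n ω p.1 p.2) μ) :
    ∀ᵐ ω ∂μ, ∀ᶠ n : ℕ in atTop,
      frob (A n ω * (A n ω)ᵀ - Q n * (Q n)ᵀ)
        ≤ Real.sqrt 3 * (n : ℝ) ^ ((3 : ℝ) / 2) * Real.sqrt (Real.log n) := by
  have hsummable : Summable fun n : ℕ ↦ 2 / (n : ℝ) ^ 2 := by
    refine ((Real.summable_one_div_nat_pow.mpr one_lt_two).mul_left 2).congr fun n ↦ ?_
    rw [mul_one_div]
  filter_upwards [ae_eventually_notMem_of_measureReal_le hsummable fun n ↦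
    measureReal_exists_offDiag_abs_mul_transpose_sub_apply_gt_le (hQ n) (hmeas n) (h01 n)
      (hber n) (hind n)] with ω hω
  filter_upwards [hω, eventually_ge_atTop 3] with n hgood hn
  simp only [not_exists, not_and, not_lt] at hgood
  have hA (u v : Fin n) : A n ω u v ∈ Set.Icc (0 : ℝ) 1 := by
    rcases h01 n ω u v with h | h <;> simp [h]
  refine frob_le_of_abs_offDiag_le hn _ (fun i ↦ ?_) hgood
  simpa using abs_mul_transpose_sub_apply_le hA (hQ n) i i
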